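/- For all a, b ∈ H²: arcsin(tanh(ρ(a,b)/2)) ≤ v(a,b), and sin(v(a,b)/2) ≤ tanh(ρ(a,b)/2). -/

import Mathlib

/-!
Write `t = ‖a - b‖ / ‖a - conj b‖ = tanh (ρ(a, b) / 2)`. Translating by a real `x` keeps `t` and
turns the angle at `x` into `θ = |arg (p / q)|` with `p = a - x`, `q = b - x` in the upper half
plane, where `cos θ = Re (p q̄) / (‖p‖ ‖q‖)`. With `‖p - conj q‖² = ‖p - q‖² + 4 Im p Im q`, the
bound `sin² (θ / 2) = (1 - cos θ) / 2 ≤ t²` is an elementary inequality, so it holds for every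
angle and hence for their supremum `v`. Conversely, `arcsin t ≤ θ` amounts to
`cot θ ≤ 2 √(Im a Im b) / ‖a - b‖`, and this holds at the midpoint of `Re a` and `Re b` shifted by
`± √(Im a Im b) (Im a - Im b) / ‖a - b‖`.
-/

open Complex ComplexConjugate

/-- The visual angle metric of the upper half plane:
`v(a,b) = sup {∠(a,x,b) : x ∈ ℝ}`, where the angle at the real vertex `x`
is `|arg((a−x)/(b−x))|`. -/
noncomputable def vAngle (a b : ℂ) : ℝ :=
  ⨆ x : ℝ, |((a - (x : ℂ)) / (b - (x : ℂ))).arg|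

/-- The inverse hyperbolic tangent. -/
noncomputable def artanh (x : ℝ) : ℝ := Real.log ((1 + x) / (1 - x)) / 2

/-- The hyperbolic metric of the upper half plane:
`ρ(a,b) = 2·artanh(|a − b| / |a − conj(b)|)`. -/
noncomputable def rhoH (a b : ℂ) : ℝ :=
  2 * artanh (‖a - b‖ / ‖a - conj b‖)

lemma artanh_eq_real_artanh {x : ℝ} (hx : x ∈ Set.Icc (-1) 1) : artanh x = Real.artanh x := by
  rw [artanh, Real.artanh_eq_half_log hx]
  ring

namespace Complex

lemma sq_norm_sub_conj (p q : ℂ) : ‖p - conj q‖ ^ 2 = ‖p - q‖ ^ 2 + 4 * (p.im * q.im) := by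
  simp only [Complex.sq_norm, normSq_apply, sub_re, sub_im, conj_re, conj_im]
  ring

lemma norm_sub_lt_norm_sub_conj {p q : ℂ} (hp : 0 < p.im) (hq : 0 < q.im) :
    ‖p - q‖ < ‖p - conj q‖ := by
  refine lt_of_pow_lt_pow_left₀ 2 (norm_nonneg _) ?_
  rw [sq_norm_sub_conj]
  nlinarith [mul_pos hp hq]

lemma norm_sub_conj_pos {p q : ℂ} (hp : 0 < p.im) (hq : 0 < q.im) : 0 < ‖p - conj q‖ :=
  (norm_nonneg _).trans_lt (norm_sub_lt_norm_sub_conj hp hq)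

lemma norm_sub_div_norm_sub_conj_mem_Ico {p q : ℂ} (hp : 0 < p.im) (hq : 0 < q.im) :
    ‖p - q‖ / ‖p - conj q‖ ∈ Set.Ico 0 1 :=
  ⟨by positivity, (div_lt_one (norm_sub_conj_pos hp hq)).2 (norm_sub_lt_norm_sub_conj hp hq)⟩

lemma cos_abs_arg_div {p q : ℂ} (hp : p ≠ 0) (hq : q ≠ 0) :
    Real.cos |arg (p / q)| = (p * conj q).re / (‖p‖ * ‖q‖) := by
  rw [Real.cos_abs, cos_arg (div_ne_zero hp hq), div_re, norm_div, ← Complex.sq_norm]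
  simp only [mul_re, conj_re, conj_im]
  field_simp
  ring

lemma sin_half_abs_arg_div_le {p q : ℂ} (hp : 0 < p.im) (hq : 0 < q.im) :
    Real.sin (|arg (p / q)| / 2) ≤ ‖p - q‖ / ‖p - conj q‖ := by
  have hp0 : p ≠ 0 := fun h ↦ by simp [h] at hp
  have hq0 : q ≠ 0 := fun h ↦ by simp [h] at hq
  set C := (p * conj q).re
  set N := ‖p‖ * ‖q‖
  have hN : 0 < N := by positivity
  have hr : 0 < ‖p - conj q‖ := norm_sub_conj_pos hp hq
  have hS : ‖p - q‖ ^ 2 = ‖p‖ ^ 2 + ‖q‖ ^ 2 - 2 * C := by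
    simp only [Complex.sq_norm, normSq_sub, C]
  have hCN : C ≤ N := by
    simpa [C, N] using re_le_norm (p * conj q)
  -- `C - (p * q).re = 2 p.im q.im`, and `-(p * q).re ≤ ‖p * q‖ = N`
  have hCN' : 2 * (p.im * q.im) ≤ N + C := by
    have := neg_le_of_abs_le (abs_re_le_norm (p * q))
    simp only [mul_re, norm_mul, conj_re, conj_im, C, N] at this ⊢
    linarith
  have key : (N - C) * ‖p - conj q‖ ^ 2 ≤ 2 * N * ‖p - q‖ ^ 2 := by
    rw [sq_norm_sub_conj]
    nlinarith [sq_nonneg (‖p‖ - ‖q‖), mul_le_mul_of_nonneg_left hCN' (sub_nonneg.2 hCN),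
      mul_pos hp hq]
  have hsin : 0 ≤ Real.sin (|arg (p / q)| / 2) :=
    Real.sin_nonneg_of_nonneg_of_le_pi (by positivity)
      (by linarith [abs_arg_le_pi (p / q), Real.pi_pos])
  rw [← pow_le_pow_iff_left₀ hsin (by positivity) two_ne_zero, Real.sin_sq_eq_half_sub,
    mul_div_cancel₀ _ two_ne_zero, cos_abs_arg_div hp0 hq0, div_pow, le_div_iff₀ (by positivity)]
  calc (1 / 2 - C / N / 2) * ‖p - conj q‖ ^ 2 = (N - C) * ‖p - conj q‖ ^ 2 / (2 * N) := by
        field_simp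
    _ ≤ ‖p - q‖ ^ 2 := by rw [div_le_iff₀ (by positivity)]; linarith

lemma abs_arg_div_le_two_mul_arcsin {p q : ℂ} (hp : 0 < p.im) (hq : 0 < q.im) :
    |arg (p / q)| ≤ 2 * Real.arcsin (‖p - q‖ / ‖p - conj q‖) := by
  have ht := norm_sub_div_norm_sub_conj_mem_Ico hp hq
  have hθ : |arg (p / q)| / 2 ∈ Set.Icc (-(Real.pi / 2)) (Real.pi / 2) :=
    ⟨by linarith [abs_nonneg (arg (p / q)), Real.pi_pos], by linarith [abs_arg_le_pi (p / q)]⟩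
  have := (Real.le_arcsin_iff_sin_le hθ ⟨by linarith [ht.1], ht.2.le⟩).2
    (sin_half_abs_arg_div_le hp hq)
  linarith

lemma arcsin_le_abs_arg_div {p q : ℂ} (hp : 0 < p.im) (hq : 0 < q.im)
    (h : ‖p - q‖ * (p * conj q).re ≤ 2 * √(p.im * q.im) * |(p * conj q).im|) :
    Real.arcsin (‖p - q‖ / ‖p - conj q‖) ≤ |arg (p / q)| := by
  have hp0 : p ≠ 0 := fun h ↦ by simp [h] at hp
  have hq0 : q ≠ 0 := fun h ↦ by simp [h] at hq
  set s := ‖p - q‖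
  set r := ‖p - conj q‖
  set m := √(p.im * q.im)
  set C := (p * conj q).re
  set D := (p * conj q).im
  have hr : 0 < r := norm_sub_conj_pos hp hq
  have hm : 0 < m := Real.sqrt_pos.2 (mul_pos hp hq)
  have hr2 : r ^ 2 = s ^ 2 + 4 * m ^ 2 := by
    rw [Real.sq_sqrt (mul_pos hp hq).le]
    exact sq_norm_sub_conj p q
  have hCD : (‖p‖ * ‖q‖) ^ 2 = C ^ 2 + D ^ 2 := by
    rw [← norm_conj q, ← norm_mul, Complex.sq_norm, normSq_apply]
    ring
  have hcos : Real.cos |arg (p / q)| ≤ 2 * m / r := by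
    rw [cos_abs_arg_div hp0 hq0, div_le_div_iff₀ (by positivity) hr]
    rcases le_or_gt C 0 with hC | hC
    · nlinarith [mul_pos (mul_pos hm hr) (mul_pos (norm_pos_iff.2 hp0) (norm_pos_iff.2 hq0))]
    rw [← pow_le_pow_iff_left₀ (by positivity) (by positivity) two_ne_zero]
    have := pow_le_pow_left₀ (by positivity) h 2
    rw [mul_pow, mul_pow, mul_pow, sq_abs] at this
    rw [mul_pow, mul_pow, mul_pow, hr2, hCD]
    nlinarith
  have hcos_arcsin : Real.cos (Real.arcsin (s / r)) = 2 * m / r := by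
    rw [Real.cos_arcsin, ← Real.sqrt_sq (by positivity : 0 ≤ 2 * m / r)]
    congr 1
    field_simp
    linarith
  have harcsin : Real.arcsin (s / r) ∈ Set.Icc 0 Real.pi :=
    ⟨Real.arcsin_nonneg.2 (by positivity),
      (Real.arcsin_le_pi_div_two _).trans (by linarith [Real.pi_pos])⟩
  exact (Real.strictAntiOn_cos.le_iff_ge ⟨abs_nonneg _, abs_arg_le_pi _⟩ harcsin).1
    (hcos.trans hcos_arcsin.ge)

-- with `s k = ± m (A - B)`, the term `s² k²` cancels against `m² (A - B)²`, and what is left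
-- reduces to `m² d² ≤ m (A + B) |d| s`
lemma cot_bound_at_shifted_midpoint {A B d s m ε k : ℝ} (hs : 0 < s)
    (hs2 : s ^ 2 = d ^ 2 + (A - B) ^ 2) (hm : 0 ≤ m) (hm2 : m ^ 2 = A * B) (hmAB : m ≤ A + B)
    (hε : ε ^ 2 = 1) (hεd : ε * d = -|d|) (hk : s * k = ε * m * (A - B)) :
    s * ((d / 2 + k) * (-d / 2 + k) + A * B) ≤
      2 * m * (ε * (-((d / 2 + k) * B) + A * (-d / 2 + k))) := by
  have hds : |d| ≤ s := abs_le_of_sq_le_sq (by nlinarith) hs.le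
  have hL : s * (s * ((d / 2 + k) * (-d / 2 + k) + A * B)) =
      m ^ 2 * (A - B) ^ 2 - s ^ 2 * d ^ 2 / 4 + s ^ 2 * m ^ 2 := by
    linear_combination (s * k + ε * m * (A - B)) * hk + m ^ 2 * (A - B) ^ 2 * hε - s ^ 2 * hm2
  have hR : s * (2 * m * (ε * (-((d / 2 + k) * B) + A * (-d / 2 + k)))) =
      2 * m ^ 2 * (A - B) ^ 2 + m * (A + B) * |d| * s := by
    linear_combination 2 * m * ε * (A - B) * hk + 2 * m ^ 2 * (A - B) ^ 2 * hε
      - m * s * (A + B) * hεd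
  refine le_of_mul_le_mul_left ?_ hs
  rw [hL, hR]
  have hmd : m * |d| * (m * |d|) ≤ m * |d| * ((A + B) * s) :=
    mul_le_mul_of_nonneg_left (mul_le_mul hmAB hds (abs_nonneg d) (hm.trans hmAB))
      (by positivity)
  have hsm : s ^ 2 * m ^ 2 = d ^ 2 * m ^ 2 + (A - B) ^ 2 * m ^ 2 := by rw [hs2]; ring
  nlinarith [sq_abs d, sq_nonneg (s * d)]

lemma exists_mul_re_le_mul_abs_im (a b : ℂ) (ha : 0 < a.im) (hb : 0 < b.im) :
    ∃ x : ℝ, ‖a - b‖ * ((a - x) * conj (b - x)).re ≤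
      2 * √(a.im * b.im) * |((a - x) * conj (b - x)).im| := by
  set s := ‖a - b‖
  set m := √(a.im * b.im)
  set d := a.re - b.re
  rcases (norm_nonneg _ : 0 ≤ s).eq_or_lt with hs | hs
  · exact ⟨0, by rw [show s = 0 from hs.symm, zero_mul]; positivity⟩
  have hs2 : s ^ 2 = d ^ 2 + (a.im - b.im) ^ 2 := by
    simp only [s, d, Complex.sq_norm, normSq_apply, sub_re, sub_im]
    ring
  have hm2 : m ^ 2 = a.im * b.im := Real.sq_sqrt (mul_pos ha hb).le
  have hmAB : m ≤ a.im + b.im := by nlinarith [Real.sqrt_nonneg (a.im * b.im)]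
  obtain ⟨ε, hε, hεd⟩ : ∃ ε : ℝ, |ε| = 1 ∧ ε * d = -|d| := by
    rcases le_total 0 d with hd | hd
    · exact ⟨-1, by norm_num, by rw [abs_of_nonneg hd]; ring⟩
    · exact ⟨1, by norm_num, by rw [abs_of_nonpos hd]; ring⟩
  set k := ε * m * (a.im - b.im) / s
  refine ⟨(a.re + b.re) / 2 - k, ?_⟩
  simp only [mul_re, mul_im, sub_re, sub_im, ofReal_re, ofReal_im, conj_re, conj_im, sub_zero,
    mul_neg, sub_neg_eq_add]
  rw [show a.re - ((a.re + b.re) / 2 - k) = d / 2 + k by ring,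
    show b.re - ((a.re + b.re) / 2 - k) = -d / 2 + k by ring]
  refine (cot_bound_at_shifted_midpoint hs hs2 (Real.sqrt_nonneg _) hm2 hmAB
    (by rw [← sq_abs, hε, one_pow]) hεd (mul_div_cancel₀ _ hs.ne')).trans ?_
  gcongr
  calc ε * _ ≤ |ε * _| := le_abs_self _
    _ = _ := by rw [abs_mul, hε, one_mul]

lemma norm_sub_div_norm_sub_conj_sub_ofReal (a b : ℂ) (x : ℝ) :
    ‖(a - x) - (b - x)‖ / ‖(a - x) - conj (b - x)‖ = ‖a - b‖ / ‖a - conj b‖ := by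
  rw [map_sub, conj_ofReal, sub_sub_sub_cancel_right, sub_sub_sub_cancel_right]

lemma exists_arcsin_le_abs_arg_sub_div (a b : ℂ) (ha : 0 < a.im) (hb : 0 < b.im) :
    ∃ x : ℝ, Real.arcsin (‖a - b‖ / ‖a - conj b‖) ≤ |arg ((a - x) / (b - x))| := by
  obtain ⟨x, hx⟩ := exists_mul_re_le_mul_abs_im a b ha hb
  refine ⟨x, ?_⟩
  rw [← norm_sub_div_norm_sub_conj_sub_ofReal a b x]
  refine arcsin_le_abs_arg_div (by simpa using ha) (by simpa using hb) ?_
  simpa only [sub_sub_sub_cancel_right, sub_im, ofReal_im, sub_zero] using hx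

end Complex

lemma le_vAngle (a b : ℂ) (x : ℝ) : |arg ((a - x) / (b - x))| ≤ vAngle a b :=
  le_ciSup (f := fun x : ℝ ↦ |arg ((a - x) / (b - x))|)
    ⟨Real.pi, Set.forall_mem_range.2 fun _ ↦ abs_arg_le_pi _⟩ x

lemma vAngle_le {a b : ℂ} {c : ℝ} (h : ∀ x : ℝ, |arg ((a - x) / (b - x))| ≤ c) :
    vAngle a b ≤ c :=
  ciSup_le h

lemma tanh_half_rhoH {a b : ℂ} (ha : 0 < a.im) (hb : 0 < b.im) :
    Real.tanh (rhoH a b / 2) = ‖a - b‖ / ‖a - conj b‖ := by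
  have ht := norm_sub_div_norm_sub_conj_mem_Ico ha hb
  rw [rhoH, mul_div_cancel_left₀ _ two_ne_zero,
    artanh_eq_real_artanh ⟨by linarith [ht.1], ht.2.le⟩,
    Real.tanh_artanh ⟨by linarith [ht.1], ht.2⟩]

theorem vAngle_bounds (a b : ℂ) (hia : 0 < a.im) (hib : 0 < b.im) :
    Real.arcsin (Real.tanh (rhoH a b / 2)) ≤ vAngle a b ∧
    Real.sin (vAngle a b / 2) ≤ Real.tanh (rhoH a b / 2) := by
  rw [tanh_half_rhoH hia hib]
  have ht := norm_sub_div_norm_sub_conj_mem_Ico hia hib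
  obtain ⟨x₀, hx₀⟩ := exists_arcsin_le_abs_arg_sub_div a b hia hib
  have hv0 : 0 ≤ vAngle a b := (abs_nonneg _).trans (le_vAngle a b x₀)
  have hv : vAngle a b ≤ 2 * Real.arcsin (‖a - b‖ / ‖a - conj b‖) := vAngle_le fun x ↦ by
    simpa only [norm_sub_div_norm_sub_conj_sub_ofReal] using
      abs_arg_div_le_two_mul_arcsin (p := a - x) (q := b - x) (by simpa using hia)
        (by simpa using hib)
  refine ⟨hx₀.trans (le_vAngle a b x₀), ?_⟩
  calc Real.sin (vAngle a b / 2) ≤ Real.sin (Real.arcsin (‖a - b‖ / ‖a - conj b‖)) :=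
        Real.sin_le_sin_of_le_of_le_pi_div_two (by linarith [Real.pi_pos])
          (Real.arcsin_le_pi_div_two _) (by linarith)
    _ = ‖a - b‖ / ‖a - conj b‖ := Real.sin_arcsin (by linarith [ht.1]) ht.2.le
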